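/- arXiv:1702.05033 — 3 statements merged into one kernel-verified Lean document; each statement's English description precedes it below -/
import Mathlib

section
/- For a prime p and positive integers n, k with n not dividing k+1, the set of elements of the form a·b^{p^k} - b·a^{p} with a, b ∈ F_{p^n} spans F_{p^n} as an F_p-vector space; i.e., there exist a, b with tr(a·b^{p^k} - b·a^p) ≠ 0. -/
/-!
Work in a finite extension `L/K` of finite fields, `q = #K`. If the trace of `a b^(q^k) - b a^q`
vanished for all `a, b`, then substituting `b = c^q` and using that the trace is invariant under
Frobenius gives `tr((c^(q^(k+1)) - c) a) = 0` for all `a`, so `c^(q^(k+1)) = c` by nondegeneracy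
of the trace form. Hence the `(k+1)`-st power of Frobenius is the identity, and since Frobenius
has order `[L : K]`, this forces `[L : K] ∣ k + 1`.
-/
theorem Algebra.trace_pow_card {K L : Type*} [Field K] [Fintype K] [Field L] [Finite L]
    [Algebra K L] (x : L) : Algebra.trace K L (x ^ Fintype.card K) = Algebra.trace K L x :=
  Algebra.trace_eq_of_algEquiv (FiniteField.frobeniusAlgEquivOfAlgebraic K L) x

namespace FiniteField

variable {K L : Type*} [Field K] [Fintype K] [Field L] [Finite L] [Algebra K L]

theorem pow_card_pow_succ_eq_self_of_trace_eq_zero {k : ℕ}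
    (h : ∀ a b : L, Algebra.trace K L (a * b ^ Fintype.card K ^ k - b * a ^ Fintype.card K) = 0)
    (c : L) : c ^ Fintype.card K ^ (k + 1) = c := by
  set q := Fintype.card K
  refine sub_eq_zero.mp <| (traceForm_nondegenerate K L).1 _ fun a ↦ ?_
  have hc : c ^ q ^ (k + 1) = (c ^ q) ^ q ^ k := by rw [← pow_mul, pow_succ']
  calc Algebra.trace K L ((c ^ q ^ (k + 1) - c) * a)
      = Algebra.trace K L (a * (c ^ q) ^ q ^ k - c ^ q * a ^ q) := by
        rw [sub_mul, map_sub, map_sub, hc, ← mul_pow, Algebra.trace_pow_card, mul_comm a]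
    _ = 0 := h a _

theorem finrank_dvd_of_forall_pow_card_pow_eq_self {m : ℕ}
    (h : ∀ c : L, c ^ Fintype.card K ^ m = c) : Module.finrank K L ∣ m := by
  rw [← orderOf_frobeniusAlgHom]
  refine orderOf_dvd_of_pow_eq_one <| AlgHom.ext fun c ↦ ?_
  simp only [AlgHom.coe_pow, coe_frobeniusAlgHom, pow_iterate, AlgHom.one_apply, h]

end FiniteField

theorem exists_trace_commutator_ne_zero_general (p n k : ℕ) [Fact p.Prime] (hn : 0 < n)
    (hndvd : ¬ n ∣ (k + 1)) :
    ∃ a b : GaloisField p n,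
      Algebra.trace (ZMod p) (GaloisField p n) (a * b ^ p ^ k - b * a ^ p) ≠ 0 := by
  by_contra! h
  apply hndvd
  rw [← GaloisField.finrank p hn.ne']
  refine FiniteField.finrank_dvd_of_forall_pow_card_pow_eq_self
    (FiniteField.pow_card_pow_succ_eq_self_of_trace_eq_zero ?_)
  simpa only [ZMod.card] using h

/-- For a prime `p` and positive integers `n, k` with `n ∤ k + 1`, there exist
`a, b ∈ F_{p^n}` with `tr(a·b^(p^k) - b·a^p) ≠ 0`. -/
theorem exists_trace_commutator_ne_zero (p n k : ℕ) [Fact p.Prime] (hn : 0 < n) (hk : 0 < k)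
    (hndvd : ¬ n ∣ (k + 1)) :
    ∃ a b : GaloisField p n,
      Algebra.trace (ZMod p) (GaloisField p n) (a * b ^ p ^ k - b * a ^ p) ≠ 0 :=
  exists_trace_commutator_ne_zero_general p n k hn hndvd
end

section
/- The completed group algebra Z_p[[Z_p]] of the additive group of p-adic integers over Z_p is isomorphic, as a topological Z_p-algebra, to the power series ring Z_p[[T]], via an isomorphism sending T to t - 1 for t a topological generator of Z_p. -/
set_option synthInstance.maxHeartbeats 1000000
set_option maxHeartbeats 1000000

/-- The transition map `ℤ_p[ℤ/p^{n+1}] → ℤ_p[ℤ/p^n]` of group algebras induced by the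
canonical projection `ℤ/p^{n+1} → ℤ/p^n`. -/
noncomputable def padicGroupAlgebraTrans (p : ℕ) [Fact p.Prime] (n : ℕ) :
    AddMonoidAlgebra ℤ_[p] (ZMod (p ^ (n + 1))) →+* AddMonoidAlgebra ℤ_[p] (ZMod (p ^ n)) :=
  AddMonoidAlgebra.mapDomainRingHom ℤ_[p]
    (ZMod.castHom (pow_dvd_pow p (Nat.le_succ n)) (ZMod (p ^ n)))

/-- The completed group algebra `ℤ_p[[ℤ_p]] = lim_n ℤ_p[ℤ/p^n]`, realized as the
`ℤ_p`-subalgebra of compatible families in `Π n, ℤ_p[ℤ/p^n]`. -/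
noncomputable def completedGroupAlgebra (p : ℕ) [Fact p.Prime] :
    Subalgebra ℤ_[p] (Π n : ℕ, AddMonoidAlgebra ℤ_[p] (ZMod (p ^ n))) where
  carrier := {f | ∀ n, padicGroupAlgebraTrans p n (f (n + 1)) = f n}
  add_mem' := fun hf hg n => by
    simpa [map_add] using by rw [hf n, hg n]
  mul_mem' := fun hf hg n => by
    simpa [map_mul] using by rw [hf n, hg n]
  one_mem' := fun n => by simp
  zero_mem' := fun n => by simp
  algebraMap_mem' := fun c n => by
    show padicGroupAlgebraTrans p n _ = _
    simp only [Pi.algebraMap_apply, AddMonoidAlgebra.coe_algebraMap, Function.comp_apply,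
      padicGroupAlgebraTrans, AddMonoidAlgebra.mapDomainRingHom_apply,
      AddMonoidAlgebra.singleZeroAlgHom_apply]
    exact AddMonoidAlgebra.mapDomain_single.trans (by rw [map_zero])

/-- `ℤ_p[[ℤ_p]]` with the inverse limit topology: each `ℤ_p[ℤ/p^n]` is topologized as a
finite product of copies of `ℤ_p` (via its coefficient functions). -/
noncomputable instance (p n : ℕ) [Fact p.Prime] :
    TopologicalSpace (AddMonoidAlgebra ℤ_[p] (ZMod (p ^ n))) :=
  TopologicalSpace.induced
    (fun f => ((f.coeff : ZMod (p ^ n) →₀ ℤ_[p]) : ZMod (p ^ n) → ℤ_[p])) inferInstance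

/-- `ℤ_p[[T]]` with the product (coefficientwise) topology. -/
noncomputable instance (p : ℕ) [Fact p.Prime] : TopologicalSpace (PowerSeries ℤ_[p]) :=
  TopologicalSpace.induced (fun f (k : ℕ) => PowerSeries.coeff k f) inferInstance

/-- The canonical topological generator `t = 1 ∈ ℤ_p` of `ℤ_p`, viewed as the compatible
family of group elements `1 ∈ ℤ/p^n` inside the completed group algebra `ℤ_p[[ℤ_p]]`. -/
noncomputable def topGen (p : ℕ) [Fact p.Prime] : completedGroupAlgebra p :=
  ⟨fun n => AddMonoidAlgebra.single (1 : ZMod (p ^ n)) (1 : ℤ_[p]), fun n => by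
    show padicGroupAlgebraTrans p n _ = _
    simp only [padicGroupAlgebraTrans, AddMonoidAlgebra.mapDomainRingHom_apply,
      Finsupp.mapDomain_single, map_one]
    exact AddMonoidAlgebra.mapDomain_single.trans (by
      congr 1; exact map_one (ZMod.castHom (pow_dvd_pow p (Nat.le_succ n)) (ZMod (p ^ n))))⟩

/-! For each `n`, the element `u = t - 1` of `ℤ_p[ℤ/p^n]` satisfies `u ^ p ^ n ∈ p ℤ_p[ℤ/p^n]`, so
it is topologically nilpotent for the `p`-adic topology and `f ↦ f(u)` is a continuous algebra map
`ℤ_p⟦X⟧ → ℤ_p[ℤ/p^n]`. These maps are compatible with the transition maps and assemble into a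
continuous map to the inverse limit.

The powers `u ^ j`, `j < p ^ n`, span `ℤ_p[ℤ/p^n]` (expand `t ^ a = (1 + u) ^ a`), hence form a
basis, as there are as many of them as the rank. So each level map is onto, and by compactness of
`ℤ_p⟦X⟧` so is the limit map. If `f` maps to zero, then modulo `p` the level-`n` image is
`∑_{j < p ^ n} a_j u ^ j`, so `p` divides every coefficient `a_j` of `f`; as `ℤ_p[ℤ/p^n]` is
`p`-torsion free, `f / p` maps to zero as well. Thus every coefficient of `f` is divisible by all
powers of `p`, and `f = 0`. A continuous bijection from a compact space to a Hausdorff space is a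
homeomorphism. -/

open Topology Filter

namespace AddMonoidAlgebra

variable {R : Type*} [CommRing R] {N : ℕ}

variable (R N) in
noncomputable def genSubOne : AddMonoidAlgebra R (ZMod N) := single 1 1 - 1

theorem single_eq_smul_genSubOne_add_one_pow [NeZero N] (a : ZMod N) (c : R) :
    single a c = c • (genSubOne R N + 1) ^ a.val := by
  rw [genSubOne, sub_add_cancel, single_pow, one_pow, smul_single', mul_one, nsmul_one,
    ZMod.natCast_zmod_val]

theorem span_genSubOne_pow [NeZero N] :
    Submodule.span R (Set.range fun j : Fin N => genSubOne R N ^ (j : ℕ)) = ⊤ := by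
  rw [eq_top_iff]
  rintro x -
  induction x using induction_linear with
  | zero => exact zero_mem _
  | add x y hx hy => exact add_mem hx hy
  | single a c =>
    rw [single_eq_smul_genSubOne_add_one_pow, add_pow]
    refine Submodule.smul_mem _ _ (Submodule.sum_mem _ fun k hk => ?_)
    have hk : k < N := (Finset.mem_range_succ_iff.1 hk).trans_lt a.val_lt
    rw [one_pow, mul_one, ← nsmul_eq_mul']
    exact Submodule.smul_of_tower_mem _ _ (Submodule.subset_span ⟨⟨k, hk⟩, rfl⟩)

theorem finrank_zmod [NeZero N] [Nontrivial R] :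
    Module.finrank R (AddMonoidAlgebra R (ZMod N)) = N := by
  rw [(coeffLinearEquiv R).finrank_eq, Module.finrank_finsupp_self, ZMod.card]

variable (R N) in
noncomputable def genSubOnePowBasis [NeZero N] [Nontrivial R] :
    Module.Basis (Fin N) R (AddMonoidAlgebra R (ZMod N)) :=
  basisOfTopLeSpanOfCardEqFinrank _ span_genSubOne_pow.ge (by rw [Fintype.card_fin, finrank_zmod])

@[simp]
theorem coe_genSubOnePowBasis [NeZero N] [Nontrivial R] :
    ⇑(genSubOnePowBasis R N) = fun j : Fin N => genSubOne R N ^ (j : ℕ) :=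
  coe_basisOfTopLeSpanOfCardEqFinrank _ _ _

/-- `1 = t ^ p ^ n = (u + 1) ^ p ^ n ≡ u ^ p ^ n + 1` modulo `p`. -/
theorem genSubOne_pow_prime_pow_mem_span {p : ℕ} (hp : p.Prime) (n : ℕ) :
    genSubOne R (p ^ n) ^ p ^ n ∈ Ideal.span {(p : AddMonoidAlgebra R (ZMod (p ^ n)))} := by
  obtain ⟨r, hr⟩ := exists_add_pow_prime_pow_eq hp (genSubOne R (p ^ n)) 1 n
  have ht : (genSubOne R (p ^ n) + 1) ^ p ^ n = 1 := by
    rw [genSubOne, sub_add_cancel, single_pow, one_pow, nsmul_one, ZMod.natCast_self]; rfl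
  rw [ht, one_pow] at hr
  exact Ideal.mem_span_singleton.2 ⟨-(genSubOne R (p ^ n) * r), by linear_combination -hr⟩

end AddMonoidAlgebra

theorem PadicInt.eq_zero_of_forall_pow_dvd {p : ℕ} [Fact p.Prime] {x : ℤ_[p]}
    (hx : ∀ m, (p : ℤ_[p]) ^ m ∣ x) : x = 0 := by
  have hkrull := Ideal.iInf_pow_eq_bot_of_isLocalRing (IsLocalRing.maximalIdeal ℤ_[p])
    (Ideal.IsMaximal.ne_top inferInstance)
  rw [PadicInt.maximalIdeal_eq_span_p] at hkrull
  rw [← Ideal.mem_bot, ← hkrull, Ideal.mem_iInf]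
  exact fun m => by rw [Ideal.span_singleton_pow]; exact Ideal.mem_span_singleton.2 (hx m)

namespace Iwasawa

open AddMonoidAlgebra (genSubOne genSubOnePowBasis span_genSubOne_pow
  genSubOne_pow_prime_pow_mem_span coeffLinearEquiv mapDomainAlgHom mapDomainAlgHom_apply
  mapDomain_single)
open PowerSeries

variable (p : ℕ) [Fact p.Prime]

theorem isInducing_coeff : IsInducing fun (f : ℤ_[p]⟦X⟧) (k : ℕ) => coeff k f := ⟨rfl⟩

theorem continuous_coeff (k : ℕ) : Continuous (coeff k : ℤ_[p]⟦X⟧ → ℤ_[p]) :=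
  (continuous_apply k).comp (isInducing_coeff p).continuous

instance : CompactSpace ℤ_[p]⟦X⟧ where
  isCompact_univ := by
    refine (isInducing_coeff p).isCompact_iff.2 ?_
    rw [Set.image_univ, Set.range_eq_univ.2 fun c => ⟨mk c, funext fun k => coeff_mk k c⟩]
    exact isCompact_univ

/-- The coefficientwise topology on `ℤ_[p]⟦X⟧` is a separate instance from (but equal to)
`PowerSeries.WithPiTopology`, in which continuity of `PowerSeries.aeval` is stated. -/
theorem continuous_id_withPiTopology :
    Continuous[_, WithPiTopology.instTopologicalSpace ℤ_[p]] (id : ℤ_[p]⟦X⟧ → ℤ_[p]⟦X⟧) :=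
  (@continuous_iff_continuousAt _ _ _ (WithPiTopology.instTopologicalSpace ℤ_[p]) _).2
    fun f => (WithPiTopology.tendsto_iff_coeff_tendsto ℤ_[p] id (𝓝 f) f).2 fun d =>
      (continuous_coeff p d).tendsto f

variable (n : ℕ)

noncomputable def coeffEquiv :
    AddMonoidAlgebra ℤ_[p] (ZMod (p ^ n)) ≃L[ℤ_[p]] (ZMod (p ^ n) → ℤ_[p]) where
  toLinearEquiv := (coeffLinearEquiv ℤ_[p]).trans (Finsupp.linearEquivFunOnFinite ℤ_[p] ℤ_[p] _)
  continuous_toFun := continuous_induced_dom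
  continuous_invFun := continuous_induced_rng.2 continuous_id

-- Restating the topology field keeps `UniformSpace.toTopologicalSpace` reducibly equal to the
-- given topology, which the instance arguments of `PowerSeries.aeval` rely on.
noncomputable instance : UniformSpace (AddMonoidAlgebra ℤ_[p] (ZMod (p ^ n))) :=
  { UniformSpace.comap (coeffEquiv p n) inferInstance with toTopologicalSpace := inferInstance }

instance : IsUniformAddGroup (AddMonoidAlgebra ℤ_[p] (ZMod (p ^ n))) :=
  IsUniformAddGroup.comap (coeffEquiv p n)

instance : CompleteSpace (AddMonoidAlgebra ℤ_[p] (ZMod (p ^ n))) :=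
  IsUniformInducing.completeSpace (f := coeffEquiv p n) ⟨rfl⟩ <| by
    rw [(coeffEquiv p n).surjective.range_eq]
    exact isComplete_univ

instance : T2Space (AddMonoidAlgebra ℤ_[p] (ZMod (p ^ n))) :=
  (coeffEquiv p n).toHomeomorph.symm.t2Space

instance : IsModuleTopology ℤ_[p] (AddMonoidAlgebra ℤ_[p] (ZMod (p ^ n))) :=
  IsModuleTopology.iso (coeffEquiv p n).symm

instance : IsTopologicalRing (AddMonoidAlgebra ℤ_[p] (ZMod (p ^ n))) :=
  IsModuleTopology.isTopologicalRing ℤ_[p] _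

theorem mem_span_natCast_pow_iff_norm_le (x : AddMonoidAlgebra ℤ_[p] (ZMod (p ^ n))) (m : ℕ) :
    x ∈ Ideal.span {(p : AddMonoidAlgebra ℤ_[p] (ZMod (p ^ n))) ^ m} ↔
      ‖coeffEquiv p n x‖ ≤ (p : ℝ)⁻¹ ^ m := by
  rw [pi_norm_le_iff_of_nonneg (by positivity), Ideal.mem_span_singleton]
  simp_rw [inv_pow, ← zpow_natCast, ← zpow_neg, PadicInt.norm_le_pow_iff_mem_span_pow,
    Ideal.mem_span_singleton]
  have natCast_pow_mul (y : AddMonoidAlgebra ℤ_[p] (ZMod (p ^ n))) :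
      (p : AddMonoidAlgebra ℤ_[p] (ZMod (p ^ n))) ^ m * y = ((p : ℤ_[p]) ^ m) • y := by
    rw [Algebra.smul_def, map_pow, map_natCast]
  constructor
  · rintro ⟨y, rfl⟩ g
    rw [natCast_pow_mul, map_smul]
    exact ⟨_, rfl⟩
  · intro h
    choose y hy using h
    refine ⟨(coeffEquiv p n).symm y, (coeffEquiv p n).injective ?_⟩
    rw [natCast_pow_mul, map_smul, ContinuousLinearEquiv.apply_symm_apply]
    exact funext hy

theorem hasBasis_nhds_zero_span_pow :
    (𝓝 (0 : AddMonoidAlgebra ℤ_[p] (ZMod (p ^ n)))).HasBasis (fun _ => True)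
      fun m => (Ideal.span {(p : AddMonoidAlgebra ℤ_[p] (ZMod (p ^ n))) ^ m} : Set _) := by
  have hp : (1 : ℝ) < p := by exact_mod_cast (Fact.out : p.Prime).one_lt
  have hnhds := (coeffEquiv p n).toHomeomorph.isInducing.nhds_eq_comap 0
  simp only [ContinuousLinearEquiv.coe_toHomeomorph, map_zero] at hnhds
  rw [hnhds]
  convert (Metric.nhds_basis_closedBall_pow (inv_pos.2 (zero_lt_one.trans hp))
    (inv_lt_one_of_one_lt₀ hp)).comap (coeffEquiv p n) using 1
  ext m x
  simp [mem_span_natCast_pow_iff_norm_le]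

instance : IsLinearTopology (AddMonoidAlgebra ℤ_[p] (ZMod (p ^ n)))
    (AddMonoidAlgebra ℤ_[p] (ZMod (p ^ n))) :=
  IsLinearTopology.mk_of_hasBasis _ (hasBasis_nhds_zero_span_pow p n)

theorem isTopologicallyNilpotent_genSubOne :
    IsTopologicallyNilpotent (genSubOne ℤ_[p] (p ^ n)) := by
  refine (hasBasis_nhds_zero_span_pow p n).tendsto_right_iff.2 fun m _ => ?_
  filter_upwards [eventually_ge_atTop (p ^ n * m)] with k hk
  rw [← Nat.add_sub_cancel' hk, pow_add, pow_mul, ← Ideal.span_singleton_pow]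
  exact Ideal.mul_mem_right _ _ (Ideal.pow_mem_pow (genSubOne_pow_prime_pow_mem_span Fact.out n) m)

noncomputable def evalGenSubOne : ℤ_[p]⟦X⟧ →ₐ[ℤ_[p]] AddMonoidAlgebra ℤ_[p] (ZMod (p ^ n)) :=
  aeval (isTopologicallyNilpotent_genSubOne p n)

theorem evalGenSubOne_X : evalGenSubOne p n X = genSubOne ℤ_[p] (p ^ n) := by
  rw [evalGenSubOne, ← Polynomial.coe_X, aeval_coe, Polynomial.aeval_X]

theorem continuous_evalGenSubOne : Continuous (evalGenSubOne p n) :=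
  @Continuous.comp _ _ _ _ (WithPiTopology.instTopologicalSpace ℤ_[p]) _ _ _
    (continuous_aeval _) (continuous_id_withPiTopology p)

theorem evalGenSubOne_surjective : Function.Surjective (evalGenSubOne p n) := by
  intro x
  have hspan : Submodule.span ℤ_[p]
      (Set.range fun j : Fin (p ^ n) => genSubOne ℤ_[p] (p ^ n) ^ (j : ℕ)) ≤
        LinearMap.range (evalGenSubOne p n).toLinearMap := by
    rw [Submodule.span_le]
    rintro _ ⟨j, rfl⟩
    exact ⟨X ^ (j : ℕ), by simp [evalGenSubOne_X]⟩
  exact hspan (span_genSubOne_pow.ge Submodule.mem_top)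

theorem p_dvd_coeff_of_evalGenSubOne_eq_zero {f : ℤ_[p]⟦X⟧} (hf : evalGenSubOne p n f = 0)
    {j : ℕ} (hj : j < p ^ n) : (p : ℤ_[p]) ∣ coeff j f := by
  set b := genSubOnePowBasis ℤ_[p] (p ^ n)
  set J := Ideal.span {(p : AddMonoidAlgebra ℤ_[p] (ZMod (p ^ n)))}
  have hJ : IsClosed (J : Set (AddMonoidAlgebra ℤ_[p] (ZMod (p ^ n)))) := by
    refine J.toAddSubgroup.isClosed_of_isOpen (J.toAddSubgroup.isOpen_of_mem_nhds (g := 0) ?_)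
    simpa [J] using (hasBasis_nhds_zero_span_pow p n).mem_of_mem (i := 1) trivial
  have hsum := (hasSum_nat_add_iff' (p ^ n)).2
    (hasSum_aeval (isTopologicallyNilpotent_genSubOne p n) f)
  have htail (k : ℕ) : coeff (k + p ^ n) f • genSubOne ℤ_[p] (p ^ n) ^ (k + p ^ n) ∈ J := by
    rw [pow_add]
    exact Submodule.smul_of_tower_mem _ _
      (J.mul_mem_left _ (genSubOne_pow_prime_pow_mem_span Fact.out n))
  have hhead : ∑ i : Fin (p ^ n), coeff i f • b i ∈ J := by
    have := hsum.tsum_eq ▸ tsum_mem hJ htail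
    rw [← evalGenSubOne, hf, zero_sub, neg_mem_iff] at this
    simpa [b, ← Fin.sum_univ_eq_sum_range] using this
  obtain ⟨y, hy⟩ := Ideal.mem_span_singleton.1 hhead
  rw [← map_natCast (algebraMap ℤ_[p] _), ← Algebra.smul_def] at hy
  refine ⟨b.repr y ⟨j, hj⟩, ?_⟩
  have := congrArg (b.repr · ⟨j, hj⟩) hy
  rwa [b.repr_sum_self, map_smul, Finsupp.smul_apply, smul_eq_mul] at this

noncomputable def transAlgHom :
    AddMonoidAlgebra ℤ_[p] (ZMod (p ^ (n + 1))) →ₐ[ℤ_[p]] AddMonoidAlgebra ℤ_[p] (ZMod (p ^ n)) :=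
  mapDomainAlgHom ℤ_[p] ℤ_[p] (ZMod.castHom (pow_dvd_pow p n.le_succ) (ZMod (p ^ n)))

theorem transAlgHom_apply (x : AddMonoidAlgebra ℤ_[p] (ZMod (p ^ (n + 1)))) :
    transAlgHom p n x = padicGroupAlgebraTrans p n x := rfl

theorem continuous_transAlgHom : Continuous (transAlgHom p n) :=
  IsModuleTopology.continuous_of_linearMap (transAlgHom p n).toLinearMap

theorem transAlgHom_genSubOne :
    transAlgHom p n (genSubOne ℤ_[p] (p ^ (n + 1))) = genSubOne ℤ_[p] (p ^ n) := by
  rw [genSubOne, genSubOne, map_sub, map_one, transAlgHom, mapDomainAlgHom_apply,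
    mapDomain_single, AddMonoidHom.coe_coe, map_one]

theorem transAlgHom_comp_evalGenSubOne :
    (transAlgHom p n).comp (evalGenSubOne p (n + 1)) = evalGenSubOne p n := by
  rw [evalGenSubOne, comp_aeval _ (continuous_transAlgHom p n)]
  congr 1
  exact transAlgHom_genSubOne p n

noncomputable def aevalTopGen : ℤ_[p]⟦X⟧ →ₐ[ℤ_[p]] completedGroupAlgebra p :=
  (AlgHom.pi (evalGenSubOne p)).codRestrict _ fun f n =>
    DFunLike.congr_fun (transAlgHom_comp_evalGenSubOne p n) f

theorem aevalTopGen_apply (f : ℤ_[p]⟦X⟧) (n : ℕ) :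
    (aevalTopGen p f : Π n, AddMonoidAlgebra ℤ_[p] (ZMod (p ^ n))) n = evalGenSubOne p n f := rfl

theorem aevalTopGen_X : aevalTopGen p X = topGen p - 1 :=
  Subtype.ext <| funext fun n => by rw [aevalTopGen_apply, evalGenSubOne_X]; rfl

theorem continuous_aevalTopGen : Continuous (aevalTopGen p) :=
  (continuous_pi (continuous_evalGenSubOne p)).subtype_mk _

theorem pow_dvd_coeff_of_aevalTopGen_eq_zero (m : ℕ) {f : ℤ_[p]⟦X⟧} (hf : aevalTopGen p f = 0)
    (j : ℕ) : (p : ℤ_[p]) ^ m ∣ coeff j f := by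
  induction m generalizing f with
  | zero => exact one_dvd _
  | succ m ih =>
    have hp := (Fact.out : p.Prime)
    have hdvd (i : ℕ) : (p : ℤ_[p]) ∣ coeff i f :=
      p_dvd_coeff_of_evalGenSubOne_eq_zero p i (congrArg (· i) (congrArg Subtype.val hf))
        (Nat.lt_pow_self hp.one_lt)
    choose g hg using hdvd
    have hfg : f = (p : ℤ_[p]) • mk g := by ext i; simp [hg]
    have hg0 : aevalTopGen p (mk g) = 0 := by
      rw [hfg, map_smul] at hf
      exact (smul_eq_zero_iff_right (by exact_mod_cast hp.ne_zero)).1 hf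
    obtain ⟨c, hc⟩ := ih hg0
    rw [coeff_mk] at hc
    exact ⟨c, by rw [hg, hc, pow_succ', mul_assoc]⟩

theorem aevalTopGen_injective : Function.Injective (aevalTopGen p) := by
  refine (injective_iff_map_eq_zero _).2 fun f hf => ext fun j => ?_
  exact PadicInt.eq_zero_of_forall_pow_dvd fun m => pow_dvd_coeff_of_aevalTopGen_eq_zero p m hf j

theorem aevalTopGen_surjective : Function.Surjective (aevalTopGen p) := by
  rintro ⟨x, hx⟩
  let Z (n : ℕ) : Set ℤ_[p]⟦X⟧ := evalGenSubOne p n ⁻¹' {x n}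
  have hZ_closed (n : ℕ) : IsClosed (Z n) :=
    isClosed_singleton.preimage (continuous_evalGenSubOne p n)
  have hZ_nonempty (n : ℕ) : (Z n).Nonempty := evalGenSubOne_surjective p n (x n)
  have hZ_anti (n : ℕ) : Z (n + 1) ⊆ Z n := fun f (hf : _ = _) => by
    change _ = _
    rw [← transAlgHom_comp_evalGenSubOne, AlgHom.comp_apply, hf, transAlgHom_apply]
    exact hx n
  obtain ⟨f, hf⟩ := IsCompact.nonempty_iInter_of_sequence_nonempty_isCompact_isClosed Z hZ_anti
    hZ_nonempty (hZ_closed 0).isCompact hZ_closed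
  exact ⟨f, Subtype.ext (funext (Set.mem_iInter.1 hf))⟩

end Iwasawa

/-- The Iwasawa isomorphism: the completed group algebra `ℤ_p[[ℤ_p]]` is isomorphic, as a
topological `ℤ_p`-algebra, to the power series ring `ℤ_p[[T]]`, via an isomorphism sending
`T` to `t - 1`, where `t` is a topological generator of `ℤ_p`. -/
theorem iwasawa_isomorphism (p : ℕ) [Fact p.Prime] :
    ∃ e : PowerSeries ℤ_[p] ≃ₐ[ℤ_[p]] completedGroupAlgebra p,
      Continuous e ∧ Continuous e.symm ∧ e PowerSeries.X = topGen p - 1 := by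
  let e := AlgEquiv.ofBijective (Iwasawa.aevalTopGen p)
    ⟨Iwasawa.aevalTopGen_injective p, Iwasawa.aevalTopGen_surjective p⟩
  have he : Continuous e := Iwasawa.continuous_aevalTopGen p
  exact ⟨e, he, he.continuous_symm_of_equiv_compact_to_t2 (f := e.toEquiv),
    Iwasawa.aevalTopGen_X p⟩
end

section
/- Let p be a prime, q = p^n, and let x = 1 + a·S^k be an element of O_n with a ∈ W(F_q) and k ≥ 1. Then x^p ≡ 1 + a·S^{n+k} + a^{1+p^k+p^{2k}+...+p^{(p-1)k}}·S^{pk} modulo S^{min(n+k,pk)+1}. In particular, if pk > n + k then x^p ≡ 1 + a S^{n+k} mod S^{n+k+1}, and if pk < n+k then x^p ≡ 1 + a^{(p^{pk}-1)/(p^k-1)} S^{pk} mod S^{pk+1}. -/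
open Matrix

variable (p n : ℕ) [Fact p.Prime]

/-- The matrix of right multiplication by `S` on `O_n = W(F_{p^n})⟨S⟩/(S^n = p, Sw = σ(w)S)`,
viewed as a free left `W(F_{p^n})`-module with basis `1, S, …, S^{n-1}`. -/
noncomputable def sMat : Matrix (Fin n) (Fin n) (WittVector p (GaloisField p n)) :=
  Matrix.of fun i j =>
    if (j : ℕ) = (i : ℕ) + 1 then 1
    else if (i : ℕ) = n - 1 ∧ (j : ℕ) = 0 then (p : WittVector p (GaloisField p n)) else 0

/-- The (twisted diagonal) matrix of right multiplication by `w ∈ W(F_{p^n})` on `O_n`. -/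
noncomputable def wDiag (w : WittVector p (GaloisField p n)) :
    Matrix (Fin n) (Fin n) (WittVector p (GaloisField p n)) :=
  Matrix.diagonal fun i => (fun x => WittVector.frobenius x)^[(i : ℕ)] w

/-- The ring `O_n = W(F_{p^n})⟨S⟩/(S^n = p, Sw = σ(w)S)`, realized as the subring of
`n × n` matrices over `W(F_{p^n})` generated by `S` and the (twisted diagonal) copies of
`W(F_{p^n})`. -/
noncomputable def Oring : Subring (Matrix (Fin n) (Fin n) (WittVector p (GaloisField p n))) :=
  Subring.closure ({sMat p n} ∪ Set.range (wDiag p n))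

theorem gf_pow_card (hn : 0 < n) (x : GaloisField p n) : x ^ p ^ n = x := by
  letI : Fintype (GaloisField p n) := Fintype.ofFinite _
  have hcard : Fintype.card (GaloisField p n) = p ^ n := by
    rw [← Nat.card_eq_fintype_card, GaloisField.card p n hn.ne']
  rw [← hcard, FiniteField.pow_card]

theorem frob_iter_n (hn : 0 < n) (w : WittVector p (GaloisField p n)) :
    (fun x => WittVector.frobenius x)^[n] w = w := by
  have h : (fun x => WittVector.frobenius x : WittVector p (GaloisField p n) → _)
      = ⇑(WittVector.frobenius) := rfl
  rw [h]
  ext i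
  rw [WittVector.iterate_frobenius_coeff]
  exact gf_pow_card p n hn _

theorem mul_sMat (M : Matrix (Fin n) (Fin n) (WittVector p (GaloisField p n))) (i j : Fin n) :
    (M * sMat p n) i j =
      if (j : ℕ) = 0 then M i ⟨n - 1, Nat.sub_lt j.pos Nat.one_pos⟩ * p
      else M i ⟨(j : ℕ) - 1, lt_of_le_of_lt (Nat.sub_le _ _) j.isLt⟩ := by
  rw [Matrix.mul_apply]
  have hS : ∀ l : Fin n, sMat p n l j =
      if (j : ℕ) = (l : ℕ) + 1 then 1
      else if (l : ℕ) = n - 1 ∧ (j : ℕ) = 0 then (p : WittVector p (GaloisField p n)) else 0 :=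
    fun l => rfl
  by_cases hj : (j : ℕ) = 0
  · rw [if_pos hj]
    rw [Finset.sum_eq_single (⟨n - 1, Nat.sub_lt j.pos Nat.one_pos⟩ : Fin n)]
    · congr 1
      rw [hS, if_neg (by simp; omega), if_pos ⟨rfl, hj⟩]
    · intro b _ hb
      have hb' : (b : ℕ) ≠ n - 1 := fun h => hb (Fin.ext h)
      rw [hS, if_neg (by omega), if_neg (by tauto), mul_zero]
    · intro h; exact absurd (Finset.mem_univ _) h
  · rw [if_neg hj]
    rw [Finset.sum_eq_single (⟨(j : ℕ) - 1, lt_of_le_of_lt (Nat.sub_le _ _) j.isLt⟩ : Fin n)]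
    · rw [hS, if_pos (by simp; omega), mul_one]
    · intro b _ hb
      have hb' : (b : ℕ) ≠ (j : ℕ) - 1 := fun h => hb (Fin.ext h)
      rw [hS, if_neg (by omega), if_neg (by omega), mul_zero]
    · intro h; exact absurd (Finset.mem_univ _) h

set_option maxHeartbeats 1000000 in
theorem sMat_pow_apply (m : ℕ) (hm : m ≤ n) (i j : Fin n) :
    (sMat p n ^ m) i j =
      if (j : ℕ) = (i : ℕ) + m then 1
      else if (j : ℕ) + n = (i : ℕ) + m then (p : WittVector p (GaloisField p n)) else 0 := by
  induction m generalizing i j with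
  | zero =>
      have hi := i.isLt; have hj := j.isLt
      rw [pow_zero, Matrix.one_apply]
      simp only [Fin.ext_iff]
      split_ifs <;> first | (exfalso; omega) | rfl
  | succ m IH =>
      have hi := i.isLt; have hj := j.isLt
      rw [pow_succ, mul_sMat]
      by_cases hjz : (j : ℕ) = 0
      · rw [if_pos hjz, IH (by omega)]
        simp only [Fin.val_mk]
        split_ifs <;> first | (exfalso; omega) | simp
      · rw [if_neg hjz, IH (by omega)]
        simp only [Fin.val_mk]
        split_ifs <;> first | (exfalso; omega) | rfl

theorem sMat_pow_n (hn : 0 < n) :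
    sMat p n ^ n = (p : Matrix (Fin n) (Fin n) (WittVector p (GaloisField p n))) := by
  refine Matrix.ext fun i j => ?_
  have hi := i.isLt; have hj := j.isLt
  rw [sMat_pow_apply p n n le_rfl, ← Matrix.diagonal_natCast, Matrix.diagonal_apply]
  simp only [Fin.ext_iff]
  split_ifs <;> first | (exfalso; omega) | rfl

theorem fiter_mul (m : ℕ) (x y : WittVector p (GaloisField p n)) :
    (fun x => WittVector.frobenius x)^[m] (x * y)
      = (fun x => WittVector.frobenius x)^[m] x * (fun x => WittVector.frobenius x)^[m] y := by
  induction m generalizing x y with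
  | zero => simp
  | succ m IH =>
      rw [Function.iterate_succ_apply, Function.iterate_succ_apply, Function.iterate_succ_apply,
        show WittVector.frobenius (x * y) = WittVector.frobenius x * WittVector.frobenius y from
          _root_.map_mul _ _ _, IH]

theorem fiter_sub (m : ℕ) (x y : WittVector p (GaloisField p n)) :
    (fun x => WittVector.frobenius x)^[m] (x - y)
      = (fun x => WittVector.frobenius x)^[m] x - (fun x => WittVector.frobenius x)^[m] y := by
  induction m generalizing x y with
  | zero => simp
  | succ m IH =>
      rw [Function.iterate_succ_apply, Function.iterate_succ_apply, Function.iterate_succ_apply,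
        show WittVector.frobenius (x - y) = WittVector.frobenius x - WittVector.frobenius y from
          _root_.map_sub _ _ _, IH]

theorem fiter_natCast (m c : ℕ) :
    (fun x => WittVector.frobenius x)^[m] ((c : WittVector p (GaloisField p n))) = c := by
  induction m with
  | zero => simp
  | succ m IH =>
      rw [Function.iterate_succ_apply,
        show WittVector.frobenius ((c : WittVector p (GaloisField p n))) = (c : _) from
          map_natCast _ _, IH]

theorem wDiag_mul (x y : WittVector p (GaloisField p n)) :
    wDiag p n x * wDiag p n y = wDiag p n (x * y) := by
  rw [wDiag, wDiag, wDiag, Matrix.diagonal_mul_diagonal]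
  exact congrArg Matrix.diagonal (funext fun i => (fiter_mul p n _ x y).symm)

theorem wDiag_sub (x y : WittVector p (GaloisField p n)) :
    wDiag p n x - wDiag p n y = wDiag p n (x - y) := by
  rw [wDiag, wDiag, wDiag, Matrix.diagonal_sub]
  exact congrArg Matrix.diagonal (funext fun i => (fiter_sub p n _ x y).symm)

theorem wDiag_natCast (c : ℕ) :
    wDiag p n ((c : WittVector p (GaloisField p n))) = (c : Matrix (Fin n) (Fin n) _) := by
  rw [wDiag, ← Matrix.diagonal_natCast]
  exact congrArg Matrix.diagonal (funext fun i => fiter_natCast p n _ c)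

theorem wDiag_one : wDiag p n 1 = 1 := by
  simpa using wDiag_natCast p n 1

theorem sMat_mul_wDiag (hn : 0 < n) (w : WittVector p (GaloisField p n)) :
    sMat p n * wDiag p n w = wDiag p n (WittVector.frobenius w) * sMat p n := by
  refine Matrix.ext fun i j => ?_
  rw [wDiag, wDiag, Matrix.mul_diagonal, Matrix.diagonal_mul]
  have hs : sMat p n i j =
      (if (j : ℕ) = (i : ℕ) + 1 then 1
       else if (i : ℕ) = n - 1 ∧ (j : ℕ) = 0 then (p : WittVector p (GaloisField p n)) else 0) :=
    rfl
  rw [hs]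
  split_ifs with h1 h2
  · rw [one_mul, mul_one, h1, ← Function.iterate_succ_apply]
  · rw [h2.1, h2.2, Function.iterate_zero_apply, ← Function.iterate_succ_apply,
      Nat.succ_eq_add_one, Nat.sub_add_cancel hn, frob_iter_n p n hn w, mul_comm]
  · rw [zero_mul, mul_zero]

noncomputable def fInv : WittVector p (GaloisField p n) → WittVector p (GaloisField p n) :=
  (fun x => WittVector.frobenius x)^[n - 1]

theorem frob_fInv (hn : 0 < n) (w : WittVector p (GaloisField p n)) :
    WittVector.frobenius (fInv p n w) = w := by
  have : WittVector.frobenius (fInv p n w)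
      = (fun x => WittVector.frobenius x)^[n - 1 + 1] w := by
    rw [Function.iterate_succ_apply']; rfl
  rw [this, Nat.sub_add_cancel hn, frob_iter_n p n hn w]

theorem wDiag_mul_sMat (hn : 0 < n) (w : WittVector p (GaloisField p n)) :
    wDiag p n w * sMat p n = sMat p n * wDiag p n (fInv p n w) := by
  rw [sMat_mul_wDiag p n hn, frob_fInv p n hn]

theorem wDiag_mul_sMat_pow (hn : 0 < n) (e : ℕ) (w : WittVector p (GaloisField p n)) :
    wDiag p n w * sMat p n ^ e = sMat p n ^ e * wDiag p n ((fInv p n)^[e] w) := by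
  induction e generalizing w with
  | zero => simp
  | succ e IH =>
      rw [pow_succ, ← mul_assoc, IH, mul_assoc, wDiag_mul_sMat p n hn, ← mul_assoc, ← pow_succ,
        Function.iterate_succ_apply']

theorem sMat_pow_mul_wDiag (hn : 0 < n) (e : ℕ) (w : WittVector p (GaloisField p n)) :
    sMat p n ^ e * wDiag p n w
      = wDiag p n ((fun x => WittVector.frobenius x)^[e] w) * sMat p n ^ e := by
  induction e generalizing w with
  | zero => simp
  | succ e IH =>
      rw [pow_succ, mul_assoc, sMat_mul_wDiag p n hn, ← mul_assoc, IH, mul_assoc, ← pow_succ,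
        Function.iterate_succ_apply]

theorem sMat_mem : sMat p n ∈ Oring p n :=
  Subring.subset_closure (Or.inl rfl)

theorem wDiag_mem (w : WittVector p (GaloisField p n)) : wDiag p n w ∈ Oring p n :=
  Subring.subset_closure (Or.inr ⟨w, rfl⟩)

def inI (N : ℕ) (M : Matrix (Fin n) (Fin n) (WittVector p (GaloisField p n))) : Prop :=
  ∃ z ∈ Oring p n, M = sMat p n ^ N * z

theorem inI_zero (N : ℕ) : inI p n N 0 :=
  ⟨0, Subring.zero_mem _, by rw [mul_zero]⟩

theorem inI_add (N : ℕ) {M M' : Matrix (Fin n) (Fin n) (WittVector p (GaloisField p n))}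
    (h : inI p n N M) (h' : inI p n N M') : inI p n N (M + M') := by
  obtain ⟨z, hz, rfl⟩ := h
  obtain ⟨z', hz', rfl⟩ := h'
  exact ⟨z + z', Subring.add_mem _ hz hz', by rw [mul_add]⟩

theorem inI_sum (N : ℕ) {ι : Type*} (s : Finset ι)
    (f : ι → Matrix (Fin n) (Fin n) (WittVector p (GaloisField p n)))
    (h : ∀ i ∈ s, inI p n N (f i)) : inI p n N (∑ i ∈ s, f i) := by
  classical
  induction s using Finset.induction_on with
  | empty => simpa using inI_zero p n N
  | insert x t hx IH =>
      rw [Finset.sum_insert hx]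
      exact inI_add p n N (h _ (Finset.mem_insert_self _ _))
        (IH fun i hi => h i (Finset.mem_insert_of_mem hi))

theorem inI_DS (hn : 0 < n) {N e : ℕ} (h : N ≤ e) (w : WittVector p (GaloisField p n)) :
    inI p n N (wDiag p n w * sMat p n ^ e) := by
  refine ⟨sMat p n ^ (e - N) * wDiag p n ((fInv p n)^[e] w), Subring.mul_mem _
    (Subring.pow_mem _ (sMat_mem p n) _) (wDiag_mem p n _), ?_⟩
  rw [wDiag_mul_sMat_pow p n hn, ← mul_assoc, ← pow_add, Nat.add_sub_cancel' h]

theorem frob_sub_pow_dvd (u : WittVector p (GaloisField p n)) :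
    (p : WittVector p (GaloisField p n)) ∣ WittVector.frobenius u - u ^ p := by
  set d := WittVector.frobenius u - u ^ p with hd
  have h0 : WittVector.constantCoeff d = 0 := by
    rw [hd, map_sub, map_pow]
    simp only [WittVector.constantCoeff_apply, WittVector.coeff_frobenius_charP]
    ring
  rcases eq_or_ne d 0 with h | h
  · rw [h]; exact dvd_zero _
  obtain ⟨m, b, hb, hmb⟩ := WittVector.exists_eq_pow_p_mul d h
  cases m with
  | zero =>
      exfalso
      apply hb
      have := h0
      rw [hmb] at this
      simpa using this
  | succ m =>
      exact ⟨(p : WittVector p (GaloisField p n)) ^ m * b, by rw [hmb, pow_succ]; ring⟩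

theorem fiter_mod (m : ℕ) (u : WittVector p (GaloisField p n)) :
    (p : WittVector p (GaloisField p n)) ∣
      (fun x => WittVector.frobenius x)^[m] u - u ^ p ^ m := by
  induction m with
  | zero => simp
  | succ m IH =>
      rw [Function.iterate_succ_apply']
      set v := (fun x => WittVector.frobenius x)^[m] u with hv
      have h1 : (p : WittVector p (GaloisField p n)) ∣ v ^ p - (u ^ p ^ m) ^ p :=
        IH.trans (sub_dvd_pow_sub_pow v (u ^ p ^ m) p)
      have h2 := frob_sub_pow_dvd p n v
      have : WittVector.frobenius v - u ^ p ^ (m + 1)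
          = (WittVector.frobenius v - v ^ p) + (v ^ p - (u ^ p ^ m) ^ p) := by
        rw [← pow_mul, ← pow_succ]
        ring
      rw [this]
      exact dvd_add h2 h1

theorem Apow (hn : 0 < n) (k : ℕ) (a : WittVector p (GaloisField p n)) (j : ℕ) :
    ∃ c : WittVector p (GaloisField p n),
      (wDiag p n a * sMat p n ^ k) ^ j = wDiag p n c * sMat p n ^ (k * j) ∧
      (p : WittVector p (GaloisField p n)) ∣
        c - a ^ (∑ i ∈ Finset.range j, p ^ (k * i)) := by
  induction j with
  | zero => exact ⟨1, by simp [wDiag_one], by simp⟩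
  | succ j IH =>
      obtain ⟨c, hc, hdvd⟩ := IH
      refine ⟨c * (fun x => WittVector.frobenius x)^[k * j] a, ?_, ?_⟩
      · rw [pow_succ, hc, mul_assoc, ← mul_assoc (sMat p n ^ (k * j)),
          sMat_pow_mul_wDiag p n hn, mul_assoc, ← pow_add, ← mul_assoc, wDiag_mul,
          ← Nat.mul_succ]
      · rw [Finset.sum_range_succ, pow_add]
        have hid : c * (fun x => WittVector.frobenius x)^[k * j] a
            - a ^ (∑ i ∈ Finset.range j, p ^ (k * i)) * a ^ p ^ (k * j)
            = (c - a ^ (∑ i ∈ Finset.range j, p ^ (k * i)))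
                * (fun x => WittVector.frobenius x)^[k * j] a
              + a ^ (∑ i ∈ Finset.range j, p ^ (k * i))
                * ((fun x => WittVector.frobenius x)^[k * j] a - a ^ p ^ (k * j)) := by
          ring
        rw [hid]
        exact dvd_add (hdvd.mul_right _) ((fiter_mod p n (k * j) a).mul_left _)

theorem main_rem (k : ℕ) (hn : 0 < n) (hk : 1 ≤ k) (a : WittVector p (GaloisField p n)) :
    inI p n (min (n + k) (p * k) + 1)
      ((1 + wDiag p n a * sMat p n ^ k) ^ p -
        (1 + wDiag p n a * sMat p n ^ (n + k) +
          wDiag p n (a ^ (∑ i ∈ Finset.range p, p ^ (k * i))) * sMat p n ^ (p * k))) := by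
  have hp2 : 2 ≤ p := (Fact.out : p.Prime).two_le
  have expand0 := (Commute.one_right (wDiag p n a * sMat p n ^ k)).add_pow p
  rw [Finset.range_eq_Ico, Finset.sum_eq_sum_Ico_succ_bot (by omega : (0:ℕ) < p + 1),
    Finset.sum_eq_sum_Ico_succ_bot (by omega : (1:ℕ) < p + 1),
    Finset.sum_Ico_succ_top (by omega : (2:ℕ) ≤ p)] at expand0
  simp only [one_pow, mul_one, pow_zero, pow_one, Nat.choose_zero_right, Nat.choose_one_right,
    Nat.choose_self, Nat.cast_one, one_mul] at expand0
  have hf1 : wDiag p n a * sMat p n ^ k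
        * ((p : ℕ) : Matrix (Fin n) (Fin n) (WittVector p (GaloisField p n)))
      = wDiag p n a * sMat p n ^ (n + k) := by
    rw [← sMat_pow_n p n hn, mul_assoc, ← pow_add, Nat.add_comm k n]
  rw [hf1] at expand0
  have key : (1 + wDiag p n a * sMat p n ^ k) ^ p -
        (1 + wDiag p n a * sMat p n ^ (n + k) +
          wDiag p n (a ^ (∑ i ∈ Finset.range p, p ^ (k * i))) * sMat p n ^ (p * k))
      = (∑ i ∈ Finset.Ico 2 p, (wDiag p n a * sMat p n ^ k) ^ i
            * ((Nat.choose p i : ℕ) : Matrix (Fin n) (Fin n) (WittVector p (GaloisField p n))))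
        + ((wDiag p n a * sMat p n ^ k) ^ p
            - wDiag p n (a ^ (∑ i ∈ Finset.range p, p ^ (k * i))) * sMat p n ^ (p * k)) := by
    rw [add_comm (1 : Matrix (Fin n) (Fin n) (WittVector p (GaloisField p n)))
      (wDiag p n a * sMat p n ^ k), expand0]
    abel
  rw [key]
  refine inI_add p n _ ?_ ?_
  · refine inI_sum p n _ _ _ ?_
    intro i hi
    obtain ⟨hi2, hip⟩ := Finset.mem_Ico.mp hi
    obtain ⟨c, hc, -⟩ := Apow p n hn k a i
    obtain ⟨m, hm⟩ := Nat.Prime.dvd_choose_self Fact.out (by omega) hip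
    have hmid : (wDiag p n a * sMat p n ^ k) ^ i
          * ((Nat.choose p i : ℕ) : Matrix (Fin n) (Fin n) (WittVector p (GaloisField p n)))
        = wDiag p n (c * (m : WittVector p (GaloisField p n))) * sMat p n ^ (k * i + n) := by
      rw [hc, hm, Nat.cast_mul, ← sMat_pow_n p n hn, ← wDiag_natCast p n m,
        sMat_pow_mul_wDiag p n hn, fiter_natCast, ← mul_assoc, mul_assoc (wDiag p n c),
        sMat_pow_mul_wDiag p n hn, fiter_natCast, ← mul_assoc (wDiag p n c), wDiag_mul,
        mul_assoc, ← pow_add]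
    rw [hmid]
    have h2k : k * 2 ≤ k * i := Nat.mul_le_mul_left k hi2
    have hmin := min_le_left (n + k) (p * k)
    exact inI_DS p n hn (by omega) _
  · obtain ⟨c, hc, hdvd⟩ := Apow p n hn k a p
    obtain ⟨e, he⟩ := hdvd
    have hlast : (wDiag p n a * sMat p n ^ k) ^ p
          - wDiag p n (a ^ (∑ i ∈ Finset.range p, p ^ (k * i))) * sMat p n ^ (p * k)
        = wDiag p n e * sMat p n ^ (n + p * k) := by
      rw [hc, Nat.mul_comm k p, ← sub_mul, wDiag_sub, he,
        mul_comm ((p : WittVector p (GaloisField p n))) e, ← wDiag_mul, wDiag_natCast,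
        ← sMat_pow_n p n hn, mul_assoc, ← pow_add]
    rw [hlast]
    have hmin := min_le_right (n + k) (p * k)
    exact inI_DS p n hn (by omega) _

/-- The `p`-th power formula in `O_n`: for `x = 1 + a·S^k` with `a ∈ W(F_{p^n})`, `k ≥ 1`,
`x^p ≡ 1 + a·S^{n+k} + a^{1+p^k+⋯+p^{(p-1)k}}·S^{pk}` modulo `S^{min(n+k, pk)+1}·O_n`.
In particular, if `pk > n + k` then `x^p ≡ 1 + a·S^{n+k} mod S^{n+k+1}`, and if
`pk < n + k` then `x^p ≡ 1 + a^{(p^{pk}-1)/(p^k-1)}·S^{pk} mod S^{pk+1}`. -/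
theorem pth_power_formula (p n k : ℕ) [Fact p.Prime] (hn : 0 < n) (hk : 1 ≤ k)
    (a : WittVector p (GaloisField p n)) :
    (∃ z ∈ Oring p n,
        (1 + wDiag p n a * sMat p n ^ k) ^ p -
          (1 + wDiag p n a * sMat p n ^ (n + k) +
            wDiag p n (a ^ (∑ i ∈ Finset.range p, p ^ (k * i))) * sMat p n ^ (p * k)) =
        sMat p n ^ (min (n + k) (p * k) + 1) * z) ∧
    (p * k > n + k → ∃ z ∈ Oring p n,
        (1 + wDiag p n a * sMat p n ^ k) ^ p - (1 + wDiag p n a * sMat p n ^ (n + k)) =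
        sMat p n ^ (n + k + 1) * z) ∧
    (p * k < n + k → ∃ z ∈ Oring p n,
        (1 + wDiag p n a * sMat p n ^ k) ^ p -
          (1 + wDiag p n (a ^ (∑ i ∈ Finset.range p, p ^ (k * i))) * sMat p n ^ (p * k)) =
        sMat p n ^ (p * k + 1) * z) := by
  have hrem := main_rem p n k hn hk a
  refine ⟨hrem, ?_, ?_⟩
  · intro hlt
    obtain ⟨z, hz, hzeq⟩ := hrem
    rw [min_eq_left (le_of_lt hlt)] at hzeq
    obtain ⟨z', hz', hzeq'⟩ :=
      inI_DS p n hn (show n + k + 1 ≤ p * k by omega)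
        (a ^ (∑ i ∈ Finset.range p, p ^ (k * i)))
    refine ⟨z + z', Subring.add_mem _ hz hz', ?_⟩
    rw [mul_add, ← hzeq, ← hzeq']
    abel
  · intro hlt
    obtain ⟨z, hz, hzeq⟩ := hrem
    rw [min_eq_right (le_of_lt hlt)] at hzeq
    obtain ⟨z', hz', hzeq'⟩ :=
      inI_DS p n hn (show p * k + 1 ≤ n + k by omega) a
    refine ⟨z + z', Subring.add_mem _ hz hz', ?_⟩
    rw [mul_add, ← hzeq, ← hzeq']
    abel
end
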